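/- Let N ≥ 1, let |ψ⟩ be a unit vector in (ℂ²)^{⊗N}, let U be a unitary on ℂ^{2^N}, let m₁,…,m_N be positive integers, for each k let R_k : Fin m_k → U(2) assign a 2×2 unitary to each message, and let α : Fin 2^N → Π_k Fin m_k be a message assignment. If for every s ∈ Fin 2^N there is a nonzero scalar c_s ∈ ℂ with (R₁(α₁(s)) ⊗ ⋯ ⊗ R_N(α_N(s))) Uᵀ|s⟩ = c_s |ψ⟩, then α is injective, and hence m₁·m₂·⋯·m_N ≥ 2^N. Consequently, the classical communication cost of allocating any N-qubit pure state through a central hub by one-way LOCC is at least N classical bits. -/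
import Mathlib


/-!
STATEMENT 19: Let N ≥ 1, let |ψ⟩ be a unit vector in (ℂ²)^{⊗N}, let U be a
unitary on ℂ^{2^N}, let m₁,…,m_N be positive integers, for each k let
R_k : Fin m_k → U(2) assign a 2×2 unitary to each message, and let
α : basis labels → Π_k Fin m_k be a message assignment.  If for every s there
is a nonzero scalar c_s ∈ ℂ with
(R₁(α₁(s)) ⊗ ⋯ ⊗ R_N(α_N(s))) Uᵀ|s⟩ = c_s |ψ⟩, then α is injective, and
hence m₁·m₂·⋯·m_N ≥ 2^N.  (Hence allocating any N-qubit pure state through a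
central hub by one-way LOCC costs at least N classical bits.)

We represent (ℂ²)^{⊗N} ≅ ℂ^{2^N} by indexing coordinates with functions
`Fin N → Fin 2` (so basis labels s range over `Fin N → Fin 2`).
-/

open Matrix

noncomputable section

/-- Computational basis vector `|s⟩` of (ℂ²)^{⊗N}. -/
def ketN {N : ℕ} (s : Fin N → Fin 2) : (Fin N → Fin 2) → ℂ :=
  fun t => if t = s then 1 else 0

/-- N-fold Kronecker (tensor) product of 2×2 matrices. -/
def tpow {N : ℕ} (M : Fin N → Matrix (Fin 2) (Fin 2) ℂ) :
    Matrix (Fin N → Fin 2) (Fin N → Fin 2) ℂ :=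
  Matrix.of fun i j => ∏ k, M k (i k) (j k)



lemma tpow_mul {N : ℕ} (A B : Fin N → Matrix (Fin 2) (Fin 2) ℂ) :
    tpow A * tpow B = tpow (fun k => A k * B k) := by
  ext i j
  simp only [tpow, Matrix.mul_apply, Matrix.of_apply]
  simp_rw [← Finset.prod_mul_distrib]
  rw [show (Finset.univ : Finset (Fin N → Fin 2)) =
      Fintype.piFinset (fun _ => Finset.univ) from (Fintype.piFinset_univ).symm,
    ← Finset.prod_univ_sum (fun _ : Fin N => (Finset.univ : Finset (Fin 2)))
      (fun k a => A k (i k) a * B k a (j k))]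

lemma tpow_star {N : ℕ} (A : Fin N → Matrix (Fin 2) (Fin 2) ℂ) :
    star (tpow A) = tpow (fun k => star (A k)) := by
  ext i j
  simp [tpow, Matrix.star_apply, Matrix.conjTranspose_apply]

lemma tpow_one {N : ℕ} : tpow (fun _ : Fin N => (1 : Matrix (Fin 2) (Fin 2) ℂ)) = 1 := by
  ext i j
  simp only [tpow, Matrix.of_apply, Matrix.one_apply]
  by_cases hij : i = j
  · simp [hij]
  · obtain ⟨k, hk⟩ := Function.ne_iff.mp hij
    rw [if_neg hij]
    exact Finset.prod_eq_zero (Finset.mem_univ k) (by simp [hk])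

lemma tpow_unitary {N : ℕ} (A : Fin N → Matrix (Fin 2) (Fin 2) ℂ)
    (hA : ∀ k, A k ∈ Matrix.unitaryGroup (Fin 2) ℂ) :
    tpow A ∈ Matrix.unitaryGroup (Fin N → Fin 2) ℂ := by
  constructor
  · rw [tpow_star, tpow_mul]
    rw [show (fun k => star (A k) * A k) = fun _ => (1 : Matrix (Fin 2) (Fin 2) ℂ) from
      funext fun k => (hA k).1]
    exact tpow_one
  · rw [tpow_star, tpow_mul]
    rw [show (fun k => A k * star (A k)) = fun _ => (1 : Matrix (Fin 2) (Fin 2) ℂ) from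
      funext fun k => (hA k).2]
    exact tpow_one

lemma unitary_mulVec_inj {n : Type*} [Fintype n] [DecidableEq n]
    (A : Matrix n n ℂ) (hA : A ∈ Matrix.unitaryGroup n ℂ)
    {v w : n → ℂ} (h : A.mulVec v = A.mulVec w) : v = w := by
  have := congrArg (fun x => (star A).mulVec x) h
  simpa [Matrix.mulVec_mulVec, hA.1] using this

theorem message_assignment_injective (N : ℕ) (hN : 1 ≤ N)
    (ψ : (Fin N → Fin 2) → ℂ)
    (hψ : ∑ t, Complex.normSq (ψ t) = 1)
    (U : Matrix (Fin N → Fin 2) (Fin N → Fin 2) ℂ)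
    (hU : U ∈ Matrix.unitaryGroup (Fin N → Fin 2) ℂ)
    (m : Fin N → ℕ) (hm : ∀ k, 1 ≤ m k)
    (R : (k : Fin N) → Fin (m k) → Matrix (Fin 2) (Fin 2) ℂ)
    (hR : ∀ k a, R k a ∈ Matrix.unitaryGroup (Fin 2) ℂ)
    (α : (Fin N → Fin 2) → ((k : Fin N) → Fin (m k)))
    (h : ∀ s : Fin N → Fin 2, ∃ c : ℂ, c ≠ 0 ∧
      (tpow (fun k => R k (α s k))).mulVec (Uᵀ.mulVec (ketN s)) = c • ψ) :
    Function.Injective α ∧ 2 ^ N ≤ ∏ k, m k := by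
  have hUt : Uᵀ ∈ Matrix.unitaryGroup (Fin N → Fin 2) ℂ := by
    constructor
    · have e1 : ∀ i j, (star Uᵀ * Uᵀ) i j = (U * star U) j i := by
        intro i j
        simp [Matrix.mul_apply, Matrix.star_eq_conjTranspose, Matrix.conjTranspose_apply,
          Matrix.transpose_apply, mul_comm]
      ext i j
      rw [e1, hU.2]
      simp [Matrix.one_apply, eq_comm]
    · have e1 : ∀ i j, (Uᵀ * star Uᵀ) i j = (star U * U) j i := by
        intro i j
        simp [Matrix.mul_apply, Matrix.star_eq_conjTranspose, Matrix.conjTranspose_apply,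
          Matrix.transpose_apply, mul_comm]
      ext i j
      rw [e1, hU.1]
      simp [Matrix.one_apply, eq_comm]
  have hinj : Function.Injective α := by
    intro s s' hss
    obtain ⟨c, hc, hcs⟩ := h s
    obtain ⟨c', hc', hcs'⟩ := h s'
    rw [hss] at hcs
    have hM := tpow_unitary (fun k => R k (α s' k)) (fun k => hR k (α s' k))
    have key : (tpow (fun k => R k (α s' k))).mulVec (Uᵀ.mulVec (c' • ketN s))
        = (tpow (fun k => R k (α s' k))).mulVec (Uᵀ.mulVec (c • ketN s')) := by
      rw [Matrix.mulVec_smul, Matrix.mulVec_smul, Matrix.mulVec_smul, Matrix.mulVec_smul,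
        hcs, hcs', smul_smul, smul_smul, mul_comm]
    have h2 := unitary_mulVec_inj _ hUt (unitary_mulVec_inj _ hM key)
    have h3 := congrFun h2 s
    simp only [ketN, Pi.smul_apply, smul_eq_mul, if_pos rfl] at h3
    by_contra hne
    rw [if_neg (fun e : s = s' => hne (e ▸ rfl))] at h3
    simp at h3
    exact hc' h3
  refine ⟨hinj, ?_⟩
  calc 2 ^ N = Fintype.card (Fin N → Fin 2) := by simp
    _ ≤ Fintype.card ((k : Fin N) → Fin (m k)) := Fintype.card_le_of_injective α hinj
    _ = ∏ k, m k := by simp
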